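/- Let n ≥ 2 and let λ_1, λ_2, …, λ_n be pairwise distinct positive real numbers, and set ℓ_j = ∏_{i=1, i≠j}^n λ_i/(λ_i − λ_j) for j = 1,…,n. Then for every integer k ≥ 1, ∑_{j=1}^n ℓ_j/λ_j^k = ∑_{α_1+⋯+α_n = k} 1/(λ_1^{α_1} λ_2^{α_2} ⋯ λ_n^{α_n}), where the sum on the right is over all n-tuples (α_1, …, α_n) of non-negative integers with α_1 + ⋯ + α_n = k (i.e., the complete homogeneous symmetric polynomial of degree k evaluated at 1/λ_1, …, 1/λ_n). -/

import Mathlib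

/-!
Put `v i = 1 / λ i`. Since `λ i / (λ i - λ j) = v j / (v j - v i)`, the left-hand side is
`∑ j v j ^ (k + n - 1) / ∏_{i ≠ j} (v j - v i)`, the divided difference of `x ↦ x ^ (k + n - 1)`
at the nodes `v`. Splitting off the node `v 0`, these divided differences and the complete
homogeneous sums `h_k(v)` obey the same recursion `f (k + 1) = v 0 * f k + f_tail (k + 1)`, and
both equal `1` at `k = 0`: for the divided difference this is the leading coefficient of the
Lagrange interpolant of `x ^ (n - 1)`.
-/

open Finset

theorem Fin.prod_univ_erase_succ {M : Type*} [CommMonoid M] {n : ℕ} (g : Fin (n + 1) → M)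
    (j : Fin n) : ∏ i ∈ univ.erase j.succ, g i = g 0 * ∏ i ∈ univ.erase j, g i.succ := by
  have h := prod_map (univ.erase j) (Fin.succEmb n) g
  rw [map_erase] at h
  rw [Fin.univ_succ, erase_cons_of_ne _ (Fin.succ_ne_zero j).symm, Finset.prod_cons]
  exact congrArg (g 0 * ·) h

theorem Finset.Nat.sum_antidiagonalTuple_succ {M : Type*} [AddCommMonoid M] (n k : ℕ)
    (f : (Fin (n + 1) → ℕ) → M) :
    ∑ α ∈ antidiagonalTuple (n + 1) k, f α =
      ∑ p ∈ antidiagonal k, ∑ β ∈ antidiagonalTuple n p.2, f (Fin.cons p.1 β) := by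
  rw [sum_sigma']
  refine sum_nbij'
    (fun α => (⟨(α 0, ∑ i : Fin n, α i.succ), Fin.tail α⟩ : (_ : ℕ × ℕ) × (Fin n → ℕ)))
    (fun x => Fin.cons x.1.1 x.2)
    ?_ ?_ (fun α _ => Fin.cons_self_tail α) ?_ (fun α _ => by rw [Fin.cons_self_tail])
  · intro α hα
    simp only [mem_antidiagonalTuple, mem_sigma, HasAntidiagonal.mem_antidiagonal] at hα ⊢
    exact ⟨by rw [← hα, Fin.sum_univ_succ], rfl⟩
  · intro x hx
    simp only [mem_antidiagonalTuple, mem_sigma, HasAntidiagonal.mem_antidiagonal] at hx ⊢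
    rw [Fin.sum_univ_succ, Fin.cons_zero]
    simp only [Fin.cons_succ, hx]
  · intro x hx
    simp only [mem_antidiagonalTuple, mem_sigma, HasAntidiagonal.mem_antidiagonal] at hx
    refine Sigma.ext ?_ (by simp [Fin.tail_cons])
    simp [hx.2]

def hsymmEval {R : Type*} [CommSemiring R] {N : ℕ} (v : Fin N → R) (k : ℕ) : R :=
  ∑ α ∈ Finset.Nat.antidiagonalTuple N k, ∏ i, v i ^ α i

section hsymmEval

variable {R : Type*} [CommSemiring R] {n : ℕ}

theorem hsymmEval_eq_sum_antidiagonal (v : Fin (n + 1) → R) (k : ℕ) :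
    hsymmEval v k = ∑ p ∈ antidiagonal k, v 0 ^ p.1 * hsymmEval (Fin.tail v) p.2 := by
  simp only [hsymmEval, Finset.Nat.sum_antidiagonalTuple_succ, mul_sum, Fin.prod_univ_succ,
    Fin.cons_zero, Fin.cons_succ, Fin.tail]

theorem hsymmEval_succ (v : Fin (n + 1) → R) (k : ℕ) :
    hsymmEval v (k + 1) = v 0 * hsymmEval v k + hsymmEval (Fin.tail v) (k + 1) := by
  rw [hsymmEval_eq_sum_antidiagonal, hsymmEval_eq_sum_antidiagonal, Nat.sum_antidiagonal_succ,
    mul_sum, add_comm]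
  simp only [pow_zero, one_mul, pow_succ', mul_assoc]

end hsymmEval

def powDividedDiff {F : Type*} [Field F] {N : ℕ} (v : Fin N → F) (m : ℕ) : F :=
  ∑ j, v j ^ m / ∏ i ∈ univ.erase j, (v j - v i)

section powDividedDiff

variable {F : Type*} [Field F] {n : ℕ} {v : Fin (n + 1) → F}

theorem powDividedDiff_eq_one (hv : Function.Injective v) : powDividedDiff v n = 1 := by
  have hdeg : (Polynomial.X ^ n : Polynomial F).degree < #(univ : Finset (Fin (n + 1))) := by
    rw [Polynomial.degree_X_pow, card_univ, Fintype.card_fin]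
    exact_mod_cast n.lt_succ_self
  simpa [powDividedDiff] using (Lagrange.coeff_eq_sum hv.injOn hdeg).symm

theorem powDividedDiff_succ (hv : Function.Injective v) (m : ℕ) :
    powDividedDiff v (m + 1) = v 0 * powDividedDiff v m + powDividedDiff (Fin.tail v) m := by
  have hterm : ∀ j, v j ^ (m + 1) / ∏ i ∈ univ.erase j, (v j - v i) =
      v 0 * (v j ^ m / ∏ i ∈ univ.erase j, (v j - v i)) +
        (v j - v 0) * v j ^ m / ∏ i ∈ univ.erase j, (v j - v i) := fun j => by ring
  -- `x ^ (m + 1) - v 0 * x ^ m = (x - v 0) * x ^ m` kills the node `v 0` and cancels the factor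
  -- `v j - v 0` at every other node.
  simp only [powDividedDiff, hterm, sum_add_distrib, ← mul_sum]
  congr 1
  rw [Fin.sum_univ_succ, sub_self, zero_mul, zero_div, zero_add]
  refine sum_congr rfl fun j _ => ?_
  rw [Fin.prod_univ_erase_succ, mul_div_mul_left _ _ (sub_ne_zero.2 (hv.ne (Fin.succ_ne_zero j)))]
  rfl

theorem powDividedDiff_add_eq_hsymmEval (hv : Function.Injective v) (k : ℕ) :
    powDividedDiff v (k + n) = hsymmEval v k := by
  induction n generalizing k with
  | zero => simp [powDividedDiff, hsymmEval, Finset.Nat.antidiagonalTuple_one]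
  | succ n ihn =>
    induction k with
    | zero => simp [powDividedDiff_eq_one hv, hsymmEval, Finset.Nat.antidiagonalTuple_zero_right]
    | succ k ihk =>
      have htail : Function.Injective (Fin.tail v) := hv.comp (Fin.succ_injective _)
      rw [show k + 1 + (n + 1) = k + (n + 1) + 1 by ring, powDividedDiff_succ hv, ihk,
        show k + (n + 1) = k + 1 + n by ring, ihn htail]
      exact (hsymmEval_succ v k).symm

end powDividedDiff

theorem div_sub_eq_inv_div_inv_sub_inv {F : Type*} [Field F] {a b : F} (ha : a ≠ 0) (hb : b ≠ 0) :
    a / (a - b) = b⁻¹ / (b⁻¹ - a⁻¹) := by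
  rw [inv_sub_inv hb ha, div_div_eq_mul_div, inv_mul_cancel_left₀ hb]

theorem sum_lagrange_weight_div_pow_eq_powDividedDiff_inv {F : Type*} [Field F] {n : ℕ}
    {l : Fin (n + 1) → F} (hl : ∀ i, l i ≠ 0) (k : ℕ) :
    ∑ j, (∏ i ∈ univ.erase j, l i / (l i - l j)) / l j ^ k =
      powDividedDiff (fun i => (l i)⁻¹) (k + n) := by
  refine sum_congr rfl fun j _ => ?_
  rw [prod_congr rfl fun i _ => div_sub_eq_inv_div_inv_sub_inv (hl i) (hl j), prod_div_distrib,
    prod_const, card_erase_of_mem (mem_univ j), card_univ, Fintype.card_fin, Nat.add_sub_cancel,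
    pow_add, inv_pow, div_eq_mul_inv _ (l j ^ k)]
  ring

theorem sum_lagrange_weights_inv_pow_eq_hsym_general
    (n : ℕ) (hn : 2 ≤ n) (l : Fin n → ℝ) (hpos : ∀ i, 0 < l i)
    (hdist : ∀ i j, i ≠ j → l i ≠ l j)
    (k : ℕ) :
    ∑ j, (∏ i ∈ univ.erase j, l i / (l i - l j)) / l j ^ k =
      ∑ α ∈ Finset.Nat.antidiagonalTuple n k, ∏ i, 1 / l i ^ (α i) := by
  obtain ⟨n, rfl⟩ : ∃ m, n = m + 1 := ⟨n - 1, by omega⟩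
  have hinj : Function.Injective fun i => (l i)⁻¹ :=
    inv_injective.comp fun i j h => by_contra fun hij => hdist i j hij h
  rw [sum_lagrange_weight_div_pow_eq_powDividedDiff_inv (fun i => (hpos i).ne'),
    powDividedDiff_add_eq_hsymmEval hinj]
  simp only [hsymmEval, one_div, inv_pow]

/-- For pairwise distinct positive reals `λ₁, …, λₙ` (`n ≥ 2`) with Lagrange weights
`ℓⱼ = ∏_{i ≠ j} λᵢ/(λᵢ - λⱼ)`, for every integer `k ≥ 1` one has
`∑_{j=1}^n ℓⱼ/λⱼᵏ = ∑_{|α| = k} 1/(λ₁^{α₁} ⋯ λₙ^{αₙ})`, the sum on the right being over all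
multi-indices `α = (α₁, …, αₙ)` of non-negative integers with `α₁ + ⋯ + αₙ = k` (the complete
homogeneous symmetric polynomial of degree `k` evaluated at `1/λ₁, …, 1/λₙ`). -/
theorem sum_lagrange_weights_inv_pow_eq_hsym
    (n : ℕ) (hn : 2 ≤ n) (l : Fin n → ℝ) (hpos : ∀ i, 0 < l i)
    (hdist : ∀ i j, i ≠ j → l i ≠ l j)
    (k : ℕ) (hk : 1 ≤ k) :
    ∑ j, (∏ i ∈ univ.erase j, l i / (l i - l j)) / l j ^ k =
      ∑ α ∈ Finset.Nat.antidiagonalTuple n k, ∏ i, 1 / l i ^ (α i) :=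
  sum_lagrange_weights_inv_pow_eq_hsym_general n hn l hpos hdist k
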